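/- arXiv:2006.09577 — 4 statements merged into one kernel-verified Lean document; each statement's English description precedes it below -/
import Mathlib

section
/- Let q be an odd prime power and d ≥ 1. If S = {s₁,…,s_t} ⊆ (𝔽_q*)^d is a t-falling star under φ_d, then the vectors s₁,…,s_{t−1} are linearly independent. Consequently, rk(T) ≥ FS(T) − 1 for any subset T ⊆ (𝔽_q*)^d, and if additionally every vector of T receives the same color to some fixed vector v ∉ T, then rk(T) ≥ FS(T). -/
open Finset

namespace EG

/-- The color set `C_d = DOT ⊔ ZERO ⊔ UP ⊔ DOWN`, where `DOT = 𝔽_q*` and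
`ZERO`, `UP`, `DOWN` are copies of `{1,…,d} × 𝔽_q`. -/
inductive Color (d : ℕ) (F : Type) [Zero F] where
  | dot  : {a : F // a ≠ 0} → Color d F
  | zero : Fin d → F → Color d F
  | up   : Fin d → F → Color d F
  | down : Fin d → F → Color d F

variable {F : Type} [Field F] [Fintype F] [LinearOrder F] {d : ℕ} [NeZero d]

/-- The standard dot product. -/
def dotp (x y : Fin d → F) : F := ∑ i, x i * y i

/-- Lexicographic order on vectors induced by the linear order on `F`. -/
def lexLt (x y : Fin d → F) : Prop :=
  ∃ i, (∀ j, j < i → x j = y j) ∧ x i < y i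

/-- The first coordinate at which `x` and `y` differ. -/
noncomputable def firstDiff (x y : Fin d → F) : Fin d :=
  if h : (Finset.univ.filter fun i => x i ≠ y i).Nonempty then
    (Finset.univ.filter fun i => x i ≠ y i).min' h
  else ⟨0, Nat.pos_of_ne_zero (NeZero.ne d)⟩

/-- The Modified Dot Product coloring, defined for `x` lexicographically below `y`. -/
noncomputable def phiAux (x y : Fin d → F) : Color d F :=
  if h0 : dotp x y = 0 then
    .zero (firstDiff x y) (x (firstDiff x y) + y (firstDiff x y))
  else if dotp x y = dotp x x then
    .up (firstDiff x y) (x (firstDiff x y) + y (firstDiff x y))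
  else if dotp x y = dotp y y then
    .down (firstDiff x y) (x (firstDiff x y) + y (firstDiff x y))
  else .dot ⟨dotp x y, h0⟩

open scoped Classical in
/-- The Modified Dot Product coloring `φ_d`, as a symmetric function. -/
noncomputable def phi (x y : Fin d → F) : Color d F :=
  if lexLt x y then phiAux x y else phiAux y x

/-- Membership in `(𝔽_q*)^d`: all coordinates nonzero. -/
def NZ (x : Fin d → F) : Prop := ∀ i, x i ≠ 0

/-- `T` contains a `t`-falling star under the coloring `f`. -/
def IsFallingStar (f : (Fin d → F) → (Fin d → F) → Color d F)
    (T : Set (Fin d → F)) (t : ℕ) : Prop :=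
  ∃ s : Fin t → (Fin d → F), Function.Injective s ∧ (∀ i, s i ∈ T) ∧
    ∃ α : Fin t → Color d F, ∀ i j : Fin t, j < i → f (s i) (s j) = α i

set_option linter.unusedSectionVars false
set_option linter.unusedVariables false

-- helper lemmas

lemma dotp_comm (x y : Fin d → F) : dotp x y = dotp y x :=
  Finset.sum_congr rfl (fun i _ => mul_comm _ _)

lemma firstDiff_comm (x y : Fin d → F) : firstDiff x y = firstDiff y x := by
  have h : (Finset.univ.filter fun i => x i ≠ y i)
      = (Finset.univ.filter fun i => y i ≠ x i) := by
    apply Finset.filter_congr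
    intro i _
    exact ne_comm
  unfold firstDiff
  rw [h]

lemma firstDiff_ne {x y : Fin d → F} (h : x ≠ y) :
    x (firstDiff x y) ≠ y (firstDiff x y) := by
  have hne : (Finset.univ.filter fun i => x i ≠ y i).Nonempty := by
    obtain ⟨i, hi⟩ := Function.ne_iff.mp h
    exact ⟨i, by simp [hi]⟩
  have : firstDiff x y ∈ (Finset.univ.filter fun i => x i ≠ y i) := by
    unfold firstDiff
    rw [dif_pos hne]
    exact Finset.min'_mem _ _
  simpa using this

lemma phiAux_eq_dot {x y : Fin d → F} {a : {a : F // a ≠ 0}}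
    (h : phiAux x y = .dot a) :
    dotp x y = a.1 ∧ (a.1 : F) ≠ dotp x x ∧ (a.1 : F) ≠ dotp y y := by
  unfold phiAux at h
  split_ifs at h with h0 h1 h2
  obtain ⟨rfl⟩ : a = ⟨dotp x y, h0⟩ := by cases h; rfl
  exact ⟨rfl, h1, h2⟩

lemma phi_eq_dot {x y : Fin d → F} {a : {a : F // a ≠ 0}}
    (h : phi x y = .dot a) :
    dotp x y = a.1 ∧ (a.1 : F) ≠ dotp x x ∧ (a.1 : F) ≠ dotp y y := by
  unfold phi at h
  split_ifs at h with hl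
  · exact phiAux_eq_dot h
  · obtain ⟨h1, h2, h3⟩ := phiAux_eq_dot h
    exact ⟨(dotp_comm x y).trans h1, h3, h2⟩

lemma phiAux_coord {x y : Fin d → F} {ι : Fin d} {b : F}
    (h : phiAux x y = .zero ι b ∨ phiAux x y = .up ι b ∨ phiAux x y = .down ι b) :
    ι = firstDiff x y ∧ b = x (firstDiff x y) + y (firstDiff x y) := by
  unfold phiAux at h
  split_ifs at h with h0 h1 h2 <;>
    rcases h with h | h | h <;> cases h <;> exact ⟨rfl, rfl⟩

lemma phi_coord {x y : Fin d → F} (hxy : x ≠ y) {ι : Fin d} {b : F}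
    (h : phi x y = .zero ι b ∨ phi x y = .up ι b ∨ phi x y = .down ι b) :
    x ι ≠ y ι ∧ x ι + y ι = b := by
  unfold phi at h
  split_ifs at h with hl
  · obtain ⟨h1, h2⟩ := phiAux_coord h
    subst h1
    exact ⟨firstDiff_ne hxy, h2.symm⟩
  · obtain ⟨h1, h2⟩ := phiAux_coord h
    subst h1
    rw [firstDiff_comm y x] at h2 ⊢
    refine ⟨firstDiff_ne hxy, ?_⟩
    rw [h2, add_comm]

lemma sum_mul_eq {t : ℕ} (g v : Fin t → F) (e : F)
    (hc : ∀ j, g j ≠ 0 → v j = e) :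
    ∑ j, g j * v j = (∑ j, g j) * e := by
  rw [Finset.sum_mul]
  apply Finset.sum_congr rfl
  intro j _
  by_cases hj : g j = 0
  · simp [hj]
  · rw [hc j hj]

lemma extract_single {t : ℕ} (g v : Fin t → F) (k : Fin t) (e : F)
    (hgsum : ∑ j, g j = 0)
    (hc : ∀ j, g j ≠ 0 → j ≠ k → v j = e)
    (h : ∑ j, g j * v j = 0) (hk : g k ≠ 0) : v k = e := by
  have h2 : ∑ j, g j * (v j - e) = g k * (v k - e) := by
    apply Finset.sum_eq_single
    · intro j _ hj
      by_cases hgj : g j = 0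
      · simp [hgj]
      · rw [hc j hgj hj]; ring
    · intro h'; simp at h'
  have h3 : ∑ j, g j * (v j - e) = ∑ j, g j * v j - (∑ j, g j) * e := by
    rw [Finset.sum_mul, ← Finset.sum_sub_distrib]
    apply Finset.sum_congr rfl
    intro j _; ring
  rw [h3, h, hgsum] at h2
  simp only [zero_mul, sub_zero] at h2
  have := mul_eq_zero.mp h2.symm
  rcases this with h' | h'
  · exact absurd h' hk
  · exact sub_eq_zero.mp h'

lemma dotp_sum_zero {t : ℕ} (w : Fin d → F) (v : Fin t → (Fin d → F)) (g : Fin t → F)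
    (h : ∑ i, g i • v i = 0) : ∑ i, g i * dotp w (v i) = 0 := by
  have hcoord : ∀ ι : Fin d, ∑ i, g i * v i ι = 0 := by
    intro ι
    have := congrFun h ι
    simpa [Finset.sum_apply] using this
  unfold dotp
  calc ∑ i, g i * ∑ ι, w ι * v i ι
      = ∑ ι, w ι * ∑ i, g i * v i ι := by
        simp_rw [Finset.mul_sum]
        rw [Finset.sum_comm]
        apply Finset.sum_congr rfl
        intro ι _
        apply Finset.sum_congr rfl
        intro i _
        ring
    _ = 0 := by simp [hcoord]


lemma color_cases (c : Color d F) :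
    (∃ a, c = Color.dot a) ∨
    (∃ ι b, c = Color.zero ι b ∨ c = Color.up ι b ∨ c = Color.down ι b) := by
  cases c with
  | dot a => exact Or.inl ⟨a, rfl⟩
  | zero ι b => exact Or.inr ⟨ι, b, Or.inl rfl⟩
  | up ι b => exact Or.inr ⟨ι, b, Or.inr (Or.inl rfl)⟩
  | down ι b => exact Or.inr ⟨ι, b, Or.inr (Or.inr rfl)⟩

lemma star_indep (t : ℕ) (s : Fin (t + 1) → (Fin d → F)) (hNZ : ∀ i, NZ (s i))
    (hinj : Function.Injective s)
    (hstar : ∃ α : Fin (t + 1) → Color d F, ∀ i j, j < i → phi (s i) (s j) = α i) :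
    LinearIndependent F (s ∘ Fin.castSucc) := by
  obtain ⟨α, hα⟩ := hstar
  rw [Fintype.linearIndependent_iff]
  intro g hg
  by_contra hne
  push_neg at hne
  set S : Finset (Fin t) := Finset.univ.filter (fun j => g j ≠ 0) with hS
  have hSne : S.Nonempty := by obtain ⟨i, hi⟩ := hne; exact ⟨i, by simp [hS, hi]⟩
  set k := S.max' hSne with hk
  have hgk : g k ≠ 0 := by have := S.max'_mem hSne; simpa [hS] using this
  have hmax : ∀ j, g j ≠ 0 → j ≤ k := fun j hj => S.le_max' j (by simp [hS, hj])
  have hrel : ∀ ι : Fin d, ∑ j, g j * s (Fin.castSucc j) ι = 0 := by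
    intro ι
    have := congrFun hg ι
    simpa [Finset.sum_apply] using this
  have hdotrel : ∀ w, ∑ j, g j * dotp w (s (Fin.castSucc j)) = 0 :=
    fun w => dotp_sum_zero w (s ∘ Fin.castSucc) g hg
  have hlt : ∀ j : Fin t, g j ≠ 0 → Fin.castSucc j < Fin.succ k := by
    intro j hj
    exact Fin.castSucc_lt_succ_iff.mpr (hmax j hj)
  have hne' : ∀ j : Fin t, g j ≠ 0 → s (Fin.succ k) ≠ s (Fin.castSucc j) :=
    fun j hj h => (ne_of_lt (hlt j hj)) (hinj h).symm
  -- Step 1: the sum of the coefficients is zero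
  have hgsum : ∑ j, g j = 0 := by
    rcases color_cases (α (Fin.succ k)) with ⟨a, hc⟩ | ⟨ι, b, hc⟩
    · have hcj : ∀ j, g j ≠ 0 → dotp (s (Fin.succ k)) (s (Fin.castSucc j)) = a.1 := by
        intro j hj
        have hph := hα _ _ (hlt j hj)
        rw [hc] at hph
        exact (phi_eq_dot hph).1
      have h2 := sum_mul_eq g _ a.1 hcj
      rw [hdotrel _] at h2
      rcases mul_eq_zero.mp h2.symm with h | h
      · exact h
      · exact absurd h a.2
    · have hcj : ∀ j, g j ≠ 0 → s (Fin.castSucc j) ι = b - s (Fin.succ k) ι := by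
        intro j hj
        have hd : phi (s (Fin.succ k)) (s (Fin.castSucc j)) = Color.zero ι b ∨
            phi (s (Fin.succ k)) (s (Fin.castSucc j)) = Color.up ι b ∨
            phi (s (Fin.succ k)) (s (Fin.castSucc j)) = Color.down ι b := by
          rw [hα _ _ (hlt j hj)]
          exact hc
        obtain ⟨hneι, hsum⟩ := phi_coord (hne' j hj) hd
        rw [← hsum]
        ring
      have he : b - s (Fin.succ k) ι ≠ 0 := by
        rw [← hcj k hgk]
        exact hNZ _ ι
      have h2 := sum_mul_eq g (fun j => s (Fin.castSucc j) ι) _ hcj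
      rw [hrel ι] at h2
      rcases mul_eq_zero.mp h2.symm with h | h
      · exact h
      · exact absurd h he
  -- Step 2: there is another index in the support
  obtain ⟨j0, hgj0, hj0k⟩ : ∃ j0, g j0 ≠ 0 ∧ j0 ≠ k := by
    by_contra h
    push_neg at h
    have hsingle : ∑ j, g j = g k :=
      Finset.sum_eq_single k
        (fun j _ hj => by by_contra hg'; exact hj (h j hg'))
        (fun h' => absurd (Finset.mem_univ k) h')
    exact hgk (hsingle ▸ hgsum)
  have hj0lt : j0 < k := lt_of_le_of_ne (hmax j0 hgj0) hj0k
  have hnek : ∀ j : Fin t, j ≠ k → s (Fin.castSucc k) ≠ s (Fin.castSucc j) :=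
    fun j hj h => hj (Fin.castSucc_injective t (hinj h)).symm
  have hltk : ∀ j : Fin t, j < k → Fin.castSucc j < Fin.castSucc k :=
    fun j hj => Fin.castSucc_lt_castSucc_iff.mpr hj
  -- Step 3: contradiction via the color of row k
  rcases color_cases (α (Fin.castSucc k)) with ⟨a, hc⟩ | ⟨ι, b, hc⟩
  · have hcj : ∀ j, g j ≠ 0 → j ≠ k →
        dotp (s (Fin.castSucc k)) (s (Fin.castSucc j)) = a.1 := by
      intro j hj hjk
      have hph := hα _ _ (hltk j (lt_of_le_of_ne (hmax j hj) hjk))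
      rw [hc] at hph
      exact (phi_eq_dot hph).1
    have hka : dotp (s (Fin.castSucc k)) (s (Fin.castSucc k)) = a.1 :=
      extract_single g _ k a.1 hgsum hcj (hdotrel _) hgk
    have hph := hα _ _ (hltk j0 hj0lt)
    rw [hc] at hph
    exact absurd hka.symm (phi_eq_dot hph).2.1
  · have hcj : ∀ j, g j ≠ 0 → j ≠ k →
        s (Fin.castSucc j) ι = b - s (Fin.castSucc k) ι := by
      intro j hj hjk
      have hd : phi (s (Fin.castSucc k)) (s (Fin.castSucc j)) = Color.zero ι b ∨
          phi (s (Fin.castSucc k)) (s (Fin.castSucc j)) = Color.up ι b ∨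
          phi (s (Fin.castSucc k)) (s (Fin.castSucc j)) = Color.down ι b := by
        rw [hα _ _ (hltk j (lt_of_le_of_ne (hmax j hj) hjk))]
        exact hc
      obtain ⟨hneι, hsum⟩ := phi_coord (hnek j hjk) hd
      rw [← hsum]
      ring
    have hkι : s (Fin.castSucc k) ι = b - s (Fin.castSucc k) ι :=
      extract_single g (fun j => s (Fin.castSucc j) ι) k _ hgsum hcj (hrel ι) hgk
    have hd0 : phi (s (Fin.castSucc k)) (s (Fin.castSucc j0)) = Color.zero ι b ∨
        phi (s (Fin.castSucc k)) (s (Fin.castSucc j0)) = Color.up ι b ∨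
        phi (s (Fin.castSucc k)) (s (Fin.castSucc j0)) = Color.down ι b := by
      rw [hα _ _ (hltk j0 hj0lt)]
      exact hc
    obtain ⟨hneι, hsum⟩ := phi_coord (hnek j0 hj0k) hd0
    apply hneι
    rw [hkι, ← hsum]
    ring

lemma card_le_finrank {n : ℕ} (T : Set (Fin d → F)) (f : Fin n → (Fin d → F))
    (hf : LinearIndependent F f) (hT : ∀ i, f i ∈ T) : n ≤ Set.finrank F T := by
  have hg : LinearIndependent F
      (fun i => (⟨f i, Submodule.subset_span (hT i)⟩ : Submodule.span F T)) :=
    LinearIndependent.of_comp ((Submodule.span F T).subtype) hf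
  have := hg.fintype_card_le_finrank
  simpa [Set.finrank] using this

/-- The first `t - 1` vectors of a `t`-falling star are linearly independent.
Consequently `rk(T) ≥ FS(T) - 1` for any `T ⊆ (𝔽_q*)^d`, and `rk(T) ≥ FS(T)` whenever
`T` lies in a monochromatic neighborhood of some vector `v ∉ T`. -/
theorem falling_star_rank (hodd : Odd (Fintype.card F)) :
    (∀ t : ℕ, ∀ s : Fin (t + 1) → (Fin d → F), (∀ i, NZ (s i)) →
      Function.Injective s →
      (∃ α : Fin (t + 1) → Color d F, ∀ i j, j < i → phi (s i) (s j) = α i) →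
      LinearIndependent F (s ∘ Fin.castSucc)) ∧
    (∀ T : Set (Fin d → F), T ⊆ {x | NZ x} → ∀ t : ℕ,
      IsFallingStar phi T t → t - 1 ≤ Set.finrank F T) ∧
    (∀ T : Set (Fin d → F), T ⊆ {x | NZ x} →
      ∀ v : Fin d → F, NZ v → v ∉ T → (∃ c : Color d F, ∀ x ∈ T, phi v x = c) →
      ∀ t : ℕ, IsFallingStar phi T t → t ≤ Set.finrank F T) := by
  refine ⟨fun t s hNZ hinj hstar => star_indep t s hNZ hinj hstar, ?_, ?_⟩
  · rintro T hT t ⟨s, hsinj, hsT, α, hα⟩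
    cases t with
    | zero => simp
    | succ t' =>
      have hind := star_indep t' s (fun i => hT (hsT i)) hsinj ⟨α, hα⟩
      simpa using card_le_finrank T (s ∘ Fin.castSucc) hind (fun i => hsT (Fin.castSucc i))
  · rintro T hT v hvNZ hvT ⟨c, hc⟩ t ⟨s, hsinj, hsT, α, hα⟩
    set s' : Fin (t + 1) → (Fin d → F) := Fin.snoc s v with hs'
    have hs'cast : ∀ i : Fin t, s' (Fin.castSucc i) = s i := fun i => by rw [hs']; exact Fin.snoc_castSucc ..
    have hs'last : s' (Fin.last t) = v := by rw [hs']; exact Fin.snoc_last ..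
    have hinj' : Function.Injective s' := by
      intro i j h
      rcases Fin.eq_castSucc_or_eq_last i with ⟨i', rfl⟩ | rfl <;>
        rcases Fin.eq_castSucc_or_eq_last j with ⟨j', rfl⟩ | rfl
      · rw [hs'cast, hs'cast] at h
        exact congrArg Fin.castSucc (hsinj h)
      · rw [hs'cast, hs'last] at h
        have : v ∈ T := by rw [← h]; exact hsT i'
        exact absurd this hvT
      · rw [hs'last, hs'cast] at h
        have : v ∈ T := by rw [h]; exact hsT j'
        exact absurd this hvT
      · rfl
    have hNZ' : ∀ i, NZ (s' i) := by
      intro i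
      rcases Fin.eq_castSucc_or_eq_last i with ⟨i', rfl⟩ | rfl
      · rw [hs'cast]; exact hT (hsT i')
      · rw [hs'last]; exact hvNZ
    have hstar' : ∃ α' : Fin (t + 1) → Color d F,
        ∀ i j, j < i → phi (s' i) (s' j) = α' i := by
      refine ⟨Fin.snoc α c, ?_⟩
      intro i j hij
      rcases Fin.eq_castSucc_or_eq_last i with ⟨i', rfl⟩ | rfl
      · have hj : j < Fin.last t := lt_trans hij (Fin.castSucc_lt_last i')
        obtain ⟨j', rfl⟩ := Fin.exists_castSucc_eq.mpr (ne_of_lt hj)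
        rw [hs'cast, hs'cast, Fin.snoc_castSucc]
        exact hα i' j' (Fin.castSucc_lt_castSucc_iff.mp hij)
      · obtain ⟨j', rfl⟩ := Fin.exists_castSucc_eq.mpr (ne_of_lt hij)
        rw [hs'last, hs'cast, Fin.snoc_last]
        exact hc _ (hsT j')
    have hind := star_indep t s' hNZ' hinj' hstar'
    have heq : (s' ∘ Fin.castSucc) = s := funext fun i => hs'cast i
    rw [heq] at hind
    simpa using card_le_finrank T s hind hsT


end EG
end

section
/- Let q be an odd prime power and d ≥ 1. Let A, B ⊆ (𝔽_q*)^d be disjoint sets of vectors and α a color such that φ_d(a,b) = α for all a ∈ A and b ∈ B. Then either A confines B or B confines A. -/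
open Finset

namespace EG

variable {F : Type} [Field F] [Fintype F] [LinearOrder F] {d : ℕ} [NeZero d]

/-- `A` confines `B`: every `a ∈ A` has constant dot product with all of `B`. -/
def Confines (A B : Set (Fin d → F)) : Prop :=
  ∀ a ∈ A, ∃ c : F, ∀ x ∈ B, dotp a x = c

lemma diff_nonempty {x y : Fin d → F} (h : x ≠ y) :
    (Finset.univ.filter fun i => x i ≠ y i).Nonempty := by
  rcases Function.ne_iff.mp h with ⟨i, hi⟩
  exact ⟨i, by simp [hi]⟩

lemma firstDiff_pre {x y : Fin d → F} (h : x ≠ y) :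
    ∀ j, j < firstDiff x y → x j = y j := by
  have hne := diff_nonempty h
  intro j hj
  by_contra hxy
  have hjmem : j ∈ Finset.univ.filter fun i => x i ≠ y i := by simp [hxy]
  have := Finset.min'_le _ j hjmem
  unfold firstDiff at hj
  rw [dif_pos hne] at hj
  exact absurd this (not_le.mpr hj)

lemma lexLt_firstDiff_lt {x y : Fin d → F} (h : lexLt x y) :
    x (firstDiff x y) < y (firstDiff x y) := by
  obtain ⟨j, hpre, hj⟩ := h
  have hxy : x ≠ y := fun he => absurd (congrFun he j) (ne_of_lt hj)
  have hne := diff_nonempty hxy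
  have hmem : j ∈ Finset.univ.filter fun i => x i ≠ y i := by simp [ne_of_lt hj]
  have hle : firstDiff x y ≤ j := by
    unfold firstDiff; rw [dif_pos hne]; exact Finset.min'_le _ j hmem
  rcases lt_or_eq_of_le hle with hlt | heq
  · exact absurd (hpre _ hlt) (firstDiff_ne hxy)
  · rw [heq]; exact hj

lemma lexLt_or_lexLt {x y : Fin d → F} (h : x ≠ y) : lexLt x y ∨ lexLt y x := by
  have h1 := firstDiff_ne h
  have h2 := firstDiff_pre h
  rcases lt_or_gt_of_ne h1 with hlt | hgt
  · exact Or.inl ⟨firstDiff x y, h2, hlt⟩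
  · exact Or.inr ⟨firstDiff x y, fun j hj => (h2 j hj).symm, hgt⟩

lemma phiAux_dot {x y : Fin d → F} {c} (h : phiAux x y = .dot c) :
    dotp x y = c.val := by
  unfold phiAux at h; split_ifs at h <;> simp_all
  exact congrArg Subtype.val h

lemma phiAux_zero {x y : Fin d → F} {i v} (h : phiAux x y = .zero i v) :
    dotp x y = 0 := by
  unfold phiAux at h; split_ifs at h <;> simp_all

lemma phiAux_up {x y : Fin d → F} {i v} (h : phiAux x y = .up i v) :
    dotp x y = dotp x x ∧ firstDiff x y = i ∧ x i + y i = v := by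
  unfold phiAux at h
  split_ifs at h with h0 h1 h2 <;> simp only [Color.up.injEq] at h <;> try exact h.elim
  obtain ⟨hi, hv⟩ := h
  exact ⟨h1, hi, by rw [← hi]; exact hv⟩

lemma phiAux_down {x y : Fin d → F} {i v} (h : phiAux x y = .down i v) :
    dotp x y = dotp y y ∧ firstDiff x y = i ∧ x i + y i = v := by
  unfold phiAux at h
  split_ifs at h with h0 h1 h2 <;> simp only [Color.down.injEq] at h <;> try exact h.elim
  obtain ⟨hi, hv⟩ := h
  exact ⟨h2, hi, by rw [← hi]; exact hv⟩

/-- If all edges between the disjoint sets `A, B ⊆ (𝔽_q*)^d` receive the same color `α`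
under `φ_d`, then either `A` confines `B` or `B` confines `A`. -/
theorem confines_or_confines (hodd : Odd (Fintype.card F))
    (A B : Set (Fin d → F)) (hA : A ⊆ {x | NZ x}) (hB : B ⊆ {x | NZ x})
    (hdisj : Disjoint A B) (α : Color d F)
    (hcross : ∀ a ∈ A, ∀ b ∈ B, phi a b = α) :
    Confines A B ∨ Confines B A := by
  classical
  rcases A.eq_empty_or_nonempty with hAe | ⟨a0, ha0⟩
  · left; intro a ha; exact absurd ha (by simp [hAe])
  rcases B.eq_empty_or_nonempty with hBe | ⟨b0, hb0⟩
  · left; intro a _; exact ⟨0, fun x hx => absurd hx (by simp [hBe])⟩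
  have hne : ∀ a ∈ A, ∀ b ∈ B, a ≠ b := by
    intro a ha b hb he
    exact Set.disjoint_left.mp hdisj ha (he ▸ hb)
  cases α with
  | dot c =>
    left
    intro a ha
    refine ⟨c.val, fun b hb => ?_⟩
    have h := hcross a ha b hb
    unfold phi at h
    split_ifs at h with hl
    · exact phiAux_dot h
    · rw [dotp_comm]; exact phiAux_dot h
  | zero i v =>
    left
    intro a ha
    refine ⟨0, fun b hb => ?_⟩
    have h := hcross a ha b hb
    unfold phi at h
    split_ifs at h with hl
    · exact phiAux_zero h
    · rw [dotp_comm]; exact phiAux_zero h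
  | up i v =>
    have H : ∀ a ∈ A, ∀ b ∈ B,
        (lexLt a b ∧ dotp a b = dotp a a ∧ firstDiff a b = i ∧ a i + b i = v) ∨
        (lexLt b a ∧ dotp b a = dotp b b ∧ firstDiff b a = i ∧ b i + a i = v) := by
      intro a ha b hb
      have h := hcross a ha b hb
      unfold phi at h
      split_ifs at h with hl
      · exact Or.inl ⟨hl, phiAux_up h⟩
      · rcases lexLt_or_lexLt (hne a ha b hb) with hl' | hl'
        · exact absurd hl' hl
        · exact Or.inr ⟨hl', phiAux_up h⟩
    -- all a ∈ A share the value a i, all b ∈ B share b i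
    have hAi : ∀ a ∈ A, a i = a0 i := by
      intro a ha
      have h1 : a i + b0 i = v := by
        rcases H a ha b0 hb0 with ⟨_, _, _, h⟩ | ⟨_, _, _, h⟩
        · exact h
        · rw [add_comm] at h; exact h
      have h2 : a0 i + b0 i = v := by
        rcases H a0 ha0 b0 hb0 with ⟨_, _, _, h⟩ | ⟨_, _, _, h⟩
        · exact h
        · rw [add_comm] at h; exact h
      have := h1.trans h2.symm
      exact add_right_cancel this
    have hBi : ∀ b ∈ B, b i = b0 i := by
      intro b hb
      have h1 : a0 i + b i = v := by
        rcases H a0 ha0 b hb with ⟨_, _, _, h⟩ | ⟨_, _, _, h⟩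
        · exact h
        · rw [add_comm] at h; exact h
      have h2 : a0 i + b0 i = v := by
        rcases H a0 ha0 b0 hb0 with ⟨_, _, _, h⟩ | ⟨_, _, _, h⟩
        · exact h
        · rw [add_comm] at h; exact h
      have := h1.trans h2.symm
      exact add_left_cancel this
    rcases lt_trichotomy (a0 i) (b0 i) with hlt | heq | hgt
    · left
      intro a ha
      refine ⟨dotp a a, fun b hb => ?_⟩
      rcases H a ha b hb with ⟨_, hd, _, _⟩ | ⟨hl, _, hfd, _⟩
      · exact hd
      · exfalso
        have := lexLt_firstDiff_lt hl
        rw [hfd] at this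
        rw [hBi b hb, hAi a ha] at this
        exact absurd hlt (not_lt.mpr (le_of_lt this))
    · exfalso
      rcases H a0 ha0 b0 hb0 with ⟨_, _, hfd, _⟩ | ⟨_, _, hfd, _⟩
      · exact firstDiff_ne (hne a0 ha0 b0 hb0) (hfd ▸ heq)
      · exact firstDiff_ne (hne a0 ha0 b0 hb0).symm (hfd ▸ heq.symm)
    · right
      intro b hb
      refine ⟨dotp b b, fun a ha => ?_⟩
      rcases H a ha b hb with ⟨hl, _, hfd, _⟩ | ⟨_, hd, _, _⟩
      · exfalso
        have := lexLt_firstDiff_lt hl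
        rw [hfd] at this
        rw [hBi b hb, hAi a ha] at this
        exact absurd hgt (not_lt.mpr (le_of_lt this))
      · exact hd
  | down i v =>
    have H : ∀ a ∈ A, ∀ b ∈ B,
        (lexLt a b ∧ dotp a b = dotp b b ∧ firstDiff a b = i ∧ a i + b i = v) ∨
        (lexLt b a ∧ dotp b a = dotp a a ∧ firstDiff b a = i ∧ b i + a i = v) := by
      intro a ha b hb
      have h := hcross a ha b hb
      unfold phi at h
      split_ifs at h with hl
      · exact Or.inl ⟨hl, phiAux_down h⟩
      · rcases lexLt_or_lexLt (hne a ha b hb) with hl' | hl'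
        · exact absurd hl' hl
        · exact Or.inr ⟨hl', phiAux_down h⟩
    have hAi : ∀ a ∈ A, a i = a0 i := by
      intro a ha
      have h1 : a i + b0 i = v := by
        rcases H a ha b0 hb0 with ⟨_, _, _, h⟩ | ⟨_, _, _, h⟩
        · exact h
        · rw [add_comm] at h; exact h
      have h2 : a0 i + b0 i = v := by
        rcases H a0 ha0 b0 hb0 with ⟨_, _, _, h⟩ | ⟨_, _, _, h⟩
        · exact h
        · rw [add_comm] at h; exact h
      exact add_right_cancel (h1.trans h2.symm)
    have hBi : ∀ b ∈ B, b i = b0 i := by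
      intro b hb
      have h1 : a0 i + b i = v := by
        rcases H a0 ha0 b hb with ⟨_, _, _, h⟩ | ⟨_, _, _, h⟩
        · exact h
        · rw [add_comm] at h; exact h
      have h2 : a0 i + b0 i = v := by
        rcases H a0 ha0 b0 hb0 with ⟨_, _, _, h⟩ | ⟨_, _, _, h⟩
        · exact h
        · rw [add_comm] at h; exact h
      exact add_left_cancel (h1.trans h2.symm)
    rcases lt_trichotomy (a0 i) (b0 i) with hlt | heq | hgt
    · right
      intro b hb
      refine ⟨dotp b b, fun a ha => ?_⟩
      rcases H a ha b hb with ⟨_, hd, _, _⟩ | ⟨hl, _, hfd, _⟩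
      · rw [dotp_comm]; exact hd
      · exfalso
        have := lexLt_firstDiff_lt hl
        rw [hfd] at this
        rw [hBi b hb, hAi a ha] at this
        exact absurd hlt (not_lt.mpr (le_of_lt this))
    · exfalso
      rcases H a0 ha0 b0 hb0 with ⟨_, _, hfd, _⟩ | ⟨_, _, hfd, _⟩
      · exact firstDiff_ne (hne a0 ha0 b0 hb0) (hfd ▸ heq)
      · exact firstDiff_ne (hne a0 ha0 b0 hb0).symm (hfd ▸ heq.symm)
    · left
      intro a ha
      refine ⟨dotp a a, fun b hb => ?_⟩
      rcases H a ha b hb with ⟨hl, _, hfd, _⟩ | ⟨_, hd, _, _⟩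
      · exfalso
        have := lexLt_firstDiff_lt hl
        rw [hfd] at this
        rw [hBi b hb, hAi a ha] at this
        exact absurd hgt (not_lt.mpr (le_of_lt this))
      · rw [dotp_comm]; exact hd

end EG
end

section
/- Let S ⊆ (𝔽_q*)^d be a set of p ≥ 1 vectors with a leftover structure under φ_d. Then FS(S) ≥ ⌈log₂ p⌉ + 1, i.e., S contains a t-falling star with t ≥ ⌈log₂ p⌉ + 1. -/
open Finset

namespace EG

variable {F : Type} [Field F] [Fintype F] [LinearOrder F] {d : ℕ} [NeZero d]

/-- The set of colors appearing on edges inside `A`. -/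
def colorsOn {V C : Type} (f : V → V → C) (A : Finset V) : Set C :=
  {c | ∃ a ∈ A, ∃ b ∈ A, a ≠ b ∧ f a b = c}

/-- `S` has a leftover structure under the edge-coloring `f`. -/
inductive Leftover {V C : Type} [DecidableEq V] (f : V → V → C) : Finset V → Prop
  | single (v : V) : Leftover f {v}
  | split (A B : Finset V) (α : C)
      (hA : Leftover f A) (hB : Leftover f B) (hdisj : Disjoint A B)
      (hcolors : colorsOn f A ∩ colorsOn f B = ∅)
      (hcross : ∀ a ∈ A, ∀ b ∈ B, f a b = α ∧ f b a = α)
      (hαA : α ∉ colorsOn f A) (hαB : α ∉ colorsOn f B) :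
      Leftover f (A ∪ B)

lemma Leftover.nonempty {V C : Type} [DecidableEq V] {f : V → V → C} {S : Finset V}
    (h : Leftover f S) : S.Nonempty := by
  induction h with
  | single v => exact ⟨v, mem_singleton_self v⟩
  | split A B α hA hB _ _ _ _ _ ihA ihB =>
      exact ihA.mono subset_union_left

lemma star_mono_t {f : (Fin d → F) → (Fin d → F) → Color d F}
    {T : Set (Fin d → F)} {t s : ℕ} (h : IsFallingStar f T t) (hst : s ≤ t) :
    IsFallingStar f T s := by
  obtain ⟨g, hg, hgT, α, hα⟩ := h
  refine ⟨g ∘ Fin.castLE hst, hg.comp (Fin.castLE_injective hst), fun i => hgT _,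
    α ∘ Fin.castLE hst, fun i j hij => hα _ _ ?_⟩
  simpa using hij

lemma star_mono_set {f : (Fin d → F) → (Fin d → F) → Color d F}
    {T T' : Set (Fin d → F)} {t : ℕ} (h : IsFallingStar f T t) (hTT : T ⊆ T') :
    IsFallingStar f T' t := by
  obtain ⟨g, hg, hgT, α, hα⟩ := h
  exact ⟨g, hg, fun i => hTT (hgT i), α, hα⟩

lemma star_extend {f : (Fin d → F) → (Fin d → F) → Color d F}
    {A : Finset (Fin d → F)} {b : Fin d → F} {α : Color d F} {t : ℕ}
    (hb : b ∉ A) (hcross : ∀ a ∈ A, f b a = α)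
    (h : IsFallingStar f (↑A) t) :
    IsFallingStar f (↑(insert b A)) (t + 1) := by
  obtain ⟨g, hg, hgT, αf, hα⟩ := h
  refine ⟨Fin.snoc g b, ?_, ?_, Fin.snoc αf α, ?_⟩
  · intro i j hij
    induction i using Fin.lastCases with
    | last =>
      induction j using Fin.lastCases with
      | last => rfl
      | cast j =>
        exfalso
        rw [Fin.snoc_last, Fin.snoc_castSucc] at hij
        exact hb (hij ▸ hgT j)
    | cast i =>
      induction j using Fin.lastCases with
      | last =>
        exfalso
        rw [Fin.snoc_last, Fin.snoc_castSucc] at hij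
        exact hb (hij ▸ hgT i)
      | cast j =>
        rw [Fin.snoc_castSucc, Fin.snoc_castSucc] at hij
        exact congrArg Fin.castSucc (hg hij)
  · intro i
    induction i using Fin.lastCases with
    | last => simpa using Finset.mem_insert_self b A
    | cast i =>
      rw [Fin.snoc_castSucc]
      exact Finset.mem_coe.2 (Finset.mem_insert_of_mem (hgT i))
  · intro i j hij
    induction i using Fin.lastCases with
    | last =>
      have hj : j ≠ Fin.last t := by
        intro hjl; rw [hjl] at hij; exact lt_irrefl _ hij
      obtain ⟨j', rfl⟩ := Fin.exists_castSucc_eq.2 hj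
      rw [Fin.snoc_last, Fin.snoc_castSucc, Fin.snoc_last]
      exact hcross _ (hgT j')
    | cast i =>
      have hj : j ≠ Fin.last t := by
        intro hjl
        rw [hjl] at hij
        exact absurd (le_of_lt hij) (not_le.2 (Fin.castSucc_lt_last i))
      obtain ⟨j', rfl⟩ := Fin.exists_castSucc_eq.2 hj
      rw [Fin.snoc_castSucc, Fin.snoc_castSucc, Fin.snoc_castSucc]
      exact hα i j' (by simpa using hij)

lemma clog_sum_le {a b : ℕ} (ha : 1 ≤ a) (hb : 1 ≤ b) (hba : b ≤ a) :
    Nat.clog 2 (a + b) ≤ Nat.clog 2 a + 1 := by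
  rw [Nat.clog_le_iff_le_pow (by norm_num)]
  have h1 : a ≤ 2 ^ Nat.clog 2 a := Nat.le_pow_clog (by norm_num) a
  calc a + b ≤ a + a := by omega
    _ ≤ 2 ^ Nat.clog 2 a + 2 ^ Nat.clog 2 a := by omega
    _ = 2 ^ (Nat.clog 2 a + 1) := by ring

lemma leftover_star (f : (Fin d → F) → (Fin d → F) → Color d F)
    (S : Finset (Fin d → F)) (hS : Leftover f S) :
    IsFallingStar f (↑S) (Nat.clog 2 S.card + 1) := by
  induction hS with
  | single v =>
    simp only [Finset.card_singleton, Nat.clog_one_right]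
    refine ⟨fun _ => v, fun i j _ => Fin.ext (by omega), fun i => by simp,
      fun _ => f v v, fun i j hij => absurd hij (by omega)⟩
  | split A B α hA hB hdisj hcolors hcross hαA hαB ihA ihB =>
    have hAne := hA.nonempty
    have hBne := hB.nonempty
    have hcardu : (A ∪ B).card = A.card + B.card := Finset.card_union_of_disjoint hdisj
    rcases le_total B.card A.card with hle | hle
    · obtain ⟨b, hbB⟩ := hBne
      have hbA : b ∉ A := fun h => (Finset.disjoint_left.1 hdisj h) hbB
      have hstar := star_extend hbA (fun a ha => (hcross a ha b hbB).2) ihA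
      have hsub : (↑(insert b A) : Set (Fin d → F)) ⊆ ↑(A ∪ B) := by
        intro x hx
        rcases Finset.mem_insert.1 hx with h | h
        · exact Finset.mem_coe.2 (Finset.mem_union_right _ (h ▸ hbB))
        · exact Finset.mem_coe.2 (Finset.mem_union_left _ h)
      refine star_mono_t (star_mono_set hstar hsub) ?_
      rw [hcardu]
      have := clog_sum_le (Finset.card_pos.2 hA.nonempty) (Finset.card_pos.2 hB.nonempty) hle
      omega
    · obtain ⟨a, haA⟩ := hAne
      have haB : a ∉ B := fun h => (Finset.disjoint_left.1 hdisj haA) h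
      have hstar := star_extend haB (fun b hb => (hcross a haA b hb).1) ihB
      have hsub : (↑(insert a B) : Set (Fin d → F)) ⊆ ↑(A ∪ B) := by
        intro x hx
        rcases Finset.mem_insert.1 hx with h | h
        · exact Finset.mem_coe.2 (Finset.mem_union_left _ (h ▸ haA))
        · exact Finset.mem_coe.2 (Finset.mem_union_right _ h)
      refine star_mono_t (star_mono_set hstar hsub) ?_
      rw [hcardu, Nat.add_comm A.card B.card]
      have := clog_sum_le (Finset.card_pos.2 hB.nonempty) (Finset.card_pos.2 hA.nonempty) hle
      omega

/-- A set `S ⊆ (𝔽_q*)^d` of `p ≥ 1` vectors with a leftover structure under `φ_d`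
contains a `t`-falling star with `t ≥ ⌈log₂ p⌉ + 1`. -/
theorem leftover_falling_star (hodd : Odd (Fintype.card F))
    (S : Finset (Fin d → F)) (hSnz : ∀ x ∈ S, NZ x) (p : ℕ) (hp : 1 ≤ p)
    (hcard : S.card = p) (hS : Leftover phi S) :
    IsFallingStar phi (↑S : Set (Fin d → F)) (Nat.clog 2 p + 1) := by
  subst hcard
  exact leftover_star phi S hS

end EG
end

section
/- Let f be a symmetric edge-coloring of the complete graph on vertex set V, and suppose S ⊆ V has a leftover structure under f with the initial bipartition S = A ⊔ B. Then FS(S) ≥ 1 + max(FS(A), FS(B)), where FS denotes the maximum size of a falling star. -/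
namespace EG

/-- `T` contains a `t`-falling star under the symmetric edge-coloring `f`. -/
def HasFS {V C : Type} (f : V → V → C) (T : Set V) (t : ℕ) : Prop :=
  ∃ s : Fin t → V, Function.Injective s ∧ (∀ i, s i ∈ T) ∧
    ∃ α : Fin t → C, ∀ i j : Fin t, j < i → f (s i) (s j) = α i

lemma leftover_nonempty {V C : Type} [DecidableEq V] {f : V → V → C} {A : Finset V}
    (h : Leftover f A) : A.Nonempty := by
  induction h with
  | single v => exact ⟨v, Finset.mem_singleton_self v⟩
  | split A B α hA hB _ _ _ _ _ ihA ihB =>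
      obtain ⟨a, ha⟩ := ihA
      exact ⟨a, Finset.mem_union_left _ ha⟩

lemma hasFS_extend {V C : Type} (f : V → V → C) (T S : Set V) (hTS : T ⊆ S) (b : V)
    (hbS : b ∈ S) (hbT : b ∉ T) (α : C) (hcross : ∀ a ∈ T, f b a = α)
    (t : ℕ) (h : HasFS f T t) : HasFS f S (t + 1) := by
  obtain ⟨s, hinj, hmem, β, hstar⟩ := h
  refine ⟨Fin.snoc s b, ?_, ?_, Fin.snoc β α, ?_⟩
  · intro i j hij
    induction i using Fin.lastCases with
    | last =>
        induction j using Fin.lastCases with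
        | last => rfl
        | cast j' =>
            rw [Fin.snoc_last, Fin.snoc_castSucc] at hij
            exact absurd (hij ▸ hmem j') hbT
    | cast i' =>
        induction j using Fin.lastCases with
        | last =>
            rw [Fin.snoc_last, Fin.snoc_castSucc] at hij
            exact absurd (hij ▸ hmem i') hbT
        | cast j' =>
            rw [Fin.snoc_castSucc, Fin.snoc_castSucc] at hij
            exact congrArg Fin.castSucc (hinj hij)
  · intro i
    induction i using Fin.lastCases with
    | last => rw [Fin.snoc_last]; exact hbS
    | cast i' => rw [Fin.snoc_castSucc]; exact hTS (hmem i')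
  · intro i j hlt
    induction i using Fin.lastCases with
    | last =>
        induction j using Fin.lastCases with
        | last => exact absurd hlt (lt_irrefl _)
        | cast j' =>
            rw [Fin.snoc_last, Fin.snoc_castSucc, Fin.snoc_last]
            exact hcross _ (hmem j')
    | cast i' =>
        induction j using Fin.lastCases with
        | last =>
            exact absurd hlt (not_lt.2 (Fin.le_last _))
        | cast j' =>
            rw [Fin.snoc_castSucc, Fin.snoc_castSucc, Fin.snoc_castSucc]
            exact hstar i' j' (Fin.castSucc_lt_castSucc_iff.1 hlt)

/-- If `S` has a leftover structure with initial bipartition `S = A ⊔ B`, then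
`FS(S) ≥ 1 + max(FS(A), FS(B))`. -/
theorem leftover_falling_star_step {V C : Type} [DecidableEq V] (f : V → V → C)
    (hsym : ∀ x y, f x y = f y x) (A B : Finset V) (α : C)
    (hA : Leftover f A) (hB : Leftover f B) (hdisj : Disjoint A B)
    (hcolors : colorsOn f A ∩ colorsOn f B = ∅)
    (hcross : ∀ a ∈ A, ∀ b ∈ B, f a b = α ∧ f b a = α)
    (hαA : α ∉ colorsOn f A) (hαB : α ∉ colorsOn f B) :
    ∀ t : ℕ, (HasFS f (↑A) t ∨ HasFS f (↑B) t) →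
      HasFS f (↑(A ∪ B) : Set V) (t + 1) := by
  intro t h
  rcases h with h | h
  · obtain ⟨b, hb⟩ := leftover_nonempty hB
    refine hasFS_extend f (↑A) _ ?_ b ?_ ?_ α ?_ t h
    · exact_mod_cast Finset.subset_union_left
    · exact_mod_cast Finset.mem_union_right _ hb
    · exact fun hbA => Finset.disjoint_left.1 hdisj hbA hb
    · intro a ha
      exact (hcross a ha b hb).2
  · obtain ⟨a, ha⟩ := leftover_nonempty hA
    refine hasFS_extend f (↑B) _ ?_ a ?_ ?_ α ?_ t h
    · exact_mod_cast Finset.subset_union_right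
    · exact_mod_cast Finset.mem_union_left _ ha
    · exact fun haB => Finset.disjoint_left.1 hdisj ha haB
    · intro b hb
      exact (hcross a ha b hb).1

end EG
end
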